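/- If S and T are non-empty sets of games over a poset A, then S ≤_L T (i.e., ⟨S ∪ L | R⟩ ≤ ⟨T ∪ L | R⟩ for all sets of games L and all non-empty sets of games R) holds if and only if for every game G, if H ◁ G for all H ∈ T, then H ◁ G for all H ∈ S. -/
import Mathlib


inductive Game (A : Type) : Type 1 where
  | atom : A → Game A
  | comp : (ι κ : Type) → (ι → Game A) → (κ → Game A) → Nonempty ι → Nonempty κ → Game A

namespace Game

variable {A : Type}

/-- `G.IsAtom` holds iff `G` is an atomic game. -/
def IsAtom : Game A → Prop
  | atom _ => True
  | comp _ _ _ _ _ _ => False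

/-- `G.IsLeftOption x`: `x` is a left option of `G`. -/
def IsLeftOption : Game A → Game A → Prop
  | atom _, _ => False
  | comp _ _ L _ _ _, x => ∃ i, L i = x

/-- `G.IsRightOption y`: `y` is a right option of `G`. -/
def IsRightOption : Game A → Game A → Prop
  | atom _, _ => False
  | comp _ _ _ R _ _, x => ∃ j, R j = x

section Ord

variable [PartialOrder A]

mutual
  /-- The order relation `G ≤ H` on games over a poset. -/
  inductive Le : Game A → Game A → Prop
    | mk : ∀ {G H : Game A},
        (∀ x, G.IsLeftOption x → Tri x H) →
        (∀ y, H.IsRightOption y → Tri G y) →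
        ((G.IsAtom ∨ H.IsAtom) → Tri G H) →
        Le G H
  /-- The relation `G ◁ H` on games over a poset. -/
  inductive Tri : Game A → Game A → Prop
    | ofRight : ∀ {G H y : Game A}, G.IsRightOption y → Le y H → Tri G H
    | ofLeft : ∀ {G H x : Game A}, H.IsLeftOption x → Le G x → Tri G H
    | ofAtom : ∀ {a b : A}, a ≤ b → Tri (Game.atom a) (Game.atom b)
end

/-- Equivalence of games: `G ≤ H` and `H ≤ G`. -/
def Equiv (G H : Game A) : Prop := Le G H ∧ Le H G

/-- A game is monotone if all of its options are good, and recursively all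
options are monotone. -/
inductive Monotone : Game A → Prop
  | mk : ∀ {G : Game A},
      (∀ x, G.IsLeftOption x → Le G x) →
      (∀ y, G.IsRightOption y → Le y G) →
      (∀ x, G.IsLeftOption x → Monotone x) →
      (∀ y, G.IsRightOption y → Monotone y) →
      Monotone G

/-- A game is passable if `G ◁ G` and recursively all options are passable. -/
inductive Passable : Game A → Prop
  | mk : ∀ {G : Game A}, Tri G G →
      (∀ x, G.IsLeftOption x → Passable x) →
      (∀ y, G.IsRightOption y → Passable y) →
      Passable G

end Ord

end Game

namespace Game

variable {A : Type}

/-- The immediate-subposition relation. -/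
inductive Sub : Game A → Game A → Prop
  | left {G x : Game A} : G.IsLeftOption x → Sub x G
  | right {G y : Game A} : G.IsRightOption y → Sub y G

theorem sub_wf : WellFounded (@Sub A) := by
  constructor
  intro G
  induction G with
  | atom a =>
    constructor
    rintro x (h | h) <;> exact h.elim
  | comp ι κ L R hι hκ ihL ihR =>
    constructor
    rintro x (h | h) <;> obtain ⟨i, rfl⟩ := h
    · exact ihL i
    · exact ihR i

variable [PartialOrder A]

theorem Le.refl : ∀ G : Game A, Le G G := by
  intro G
  induction G with
  | atom a =>
    exact .mk (fun x hx => hx.elim) (fun y hy => hy.elim) (fun _ => .ofAtom le_rfl)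
  | comp ι κ L R hι hκ ihL ihR =>
    refine .mk ?_ ?_ ?_
    · rintro x ⟨i, rfl⟩
      exact .ofLeft ⟨i, rfl⟩ (ihL i)
    · rintro y ⟨j, rfl⟩
      exact .ofRight ⟨j, rfl⟩ (ihR j)
    · rintro (h | h) <;> exact h.elim

theorem trans_aux : ∀ (G H K : Game A),
    (Le G H → Le H K → Le G K) ∧ (Le G H → Tri H K → Tri G K) ∧
    (Tri G H → Le H K → Tri G K) := by
  intro G
  induction G using Game.sub_wf.induction with
  | _ G ihG =>
  intro H
  induction H using Game.sub_wf.induction with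
  | _ H ihH =>
  intro K
  induction K using Game.sub_wf.induction with
  | _ K ihK =>
  have t3 : Tri G H → Le H K → Tri G K := by
    intro hGH hHK
    cases hGH with
    | ofRight hy hle =>
      exact .ofRight hy ((ihG _ (Sub.right hy) H K).1 hle hHK)
    | ofLeft hx hle =>
      obtain ⟨hL, hR, hA⟩ := hHK
      exact (ihH _ (Sub.left hx) K).2.1 hle (hL _ hx)
    | ofAtom hab =>
      obtain ⟨hL, hR, hA⟩ := hHK
      have hHK' := hA (Or.inl trivial)
      cases hHK' with
      | ofRight hy hle => exact hy.elim
      | ofLeft hx hle =>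
        refine .ofLeft hx ((ihK _ (Sub.left hx)).1 ?_ hle)
        exact .mk (fun _ h => h.elim) (fun _ h => h.elim) (fun _ => .ofAtom hab)
      | ofAtom hbc => exact .ofAtom (hab.trans hbc)
  have t2 : Le G H → Tri H K → Tri G K := by
    intro hGH hHK
    cases hHK with
    | ofRight hy hle =>
      obtain ⟨hL, hR, hA⟩ := hGH
      exact (ihH _ (Sub.right hy) K).2.2 (hR _ hy) hle
    | ofLeft hx hle =>
      exact .ofLeft hx ((ihK _ (Sub.left hx)).1 hGH hle)
    | ofAtom hbc =>
      obtain ⟨hL, hR, hA⟩ := hGH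
      have hGH' := hA (Or.inr trivial)
      cases hGH' with
      | ofRight hy hle =>
        refine .ofRight hy ((ihG _ (Sub.right hy) _ _).1 hle ?_)
        exact .mk (fun _ h => h.elim) (fun _ h => h.elim) (fun _ => .ofAtom hbc)
      | ofLeft hx hle => exact hx.elim
      | ofAtom hab => exact .ofAtom (hab.trans hbc)
  refine ⟨fun hGH hHK => ?_, t2, t3⟩
  refine Le.mk ?_ ?_ ?_
  · intro x hx
    obtain ⟨hL1, hR1, hA1⟩ := hGH
    exact (ihG x (Sub.left hx) H K).2.2 (hL1 x hx) hHK
  · intro y hy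
    obtain ⟨hL2, hR2, hA2⟩ := hHK
    exact (ihK y (Sub.right hy)).2.1 hGH (hR2 y hy)
  · rintro (h | h)
    · obtain ⟨hL1, hR1, hA1⟩ := hGH
      exact t3 (hA1 (Or.inl h)) hHK
    · obtain ⟨hL2, hR2, hA2⟩ := hHK
      exact t2 hGH (hA2 (Or.inr h))

theorem Le.trans {G H K : Game A} (h1 : Le G H) (h2 : Le H K) : Le G K :=
  (trans_aux G H K).1 h1 h2

theorem tri_of_tri_le {G H K : Game A} (h1 : Tri G H) (h2 : Le H K) : Tri G K :=
  (trans_aux G H K).2.2 h1 h2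

end Game

/-- The left order `S ≤_L T` (i.e. `⟨S ∪ L | R⟩ ≤ ⟨T ∪ L | R⟩` for all sets
of games `L` and all non-empty sets of games `R`) holds iff every game `G`
with `H ◁ G` for all `H ∈ T` also satisfies `H ◁ G` for all `H ∈ S`. -/
theorem Game.leL_iff {A : Type} [PartialOrder A]
    (σ τ : Type) (hσ : Nonempty σ) (hτ : Nonempty τ)
    (S : σ → Game A) (T : τ → Game A) :
    (∀ (ιL ιR : Type) (L : ιL → Game A) (hR : Nonempty ιR) (R : ιR → Game A),
        Game.Le (Game.comp (σ ⊕ ιL) ιR (Sum.elim S L) R (hσ.map Sum.inl) hR)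
                (Game.comp (τ ⊕ ιL) ιR (Sum.elim T L) R (hτ.map Sum.inl) hR)) ↔
    (∀ G : Game A, (∀ j, Game.Tri (T j) G) → ∀ i, Game.Tri (S i) G) := by
  constructor
  · intro h G hT i
    cases G with
    | atom a =>
      have hle := h Empty PUnit (fun e => e.elim) ⟨⟨⟩⟩ (fun _ => Game.atom a)
      obtain ⟨hL, hR, hA⟩ := hle
      have h1 : Game.Tri (S i)
          (Game.comp (τ ⊕ Empty) PUnit (Sum.elim T (fun e => e.elim))
            (fun _ => Game.atom a) (hτ.map Sum.inl) ⟨⟨⟩⟩) :=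
        hL (S i) ⟨Sum.inl i, rfl⟩
      refine Game.tri_of_tri_le h1 (Game.Le.mk ?_ ?_ ?_)
      · rintro x ⟨(j | e), rfl⟩
        · exact hT j
        · exact e.elim
      · rintro y hy
        exact hy.elim
      · intro _
        exact .ofRight ⟨⟨⟩, rfl⟩ (Game.Le.refl _)
    | comp ιl κl Gl Gr hι hκ =>
      have hle := h ιl κl Gl hκ Gr
      obtain ⟨hL, hR, hA⟩ := hle
      have h1 : Game.Tri (S i)
          (Game.comp (τ ⊕ ιl) κl (Sum.elim T Gl) Gr (hτ.map Sum.inl) hκ) :=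
        hL (S i) ⟨Sum.inl i, rfl⟩
      refine Game.tri_of_tri_le h1 (Game.Le.mk ?_ ?_ ?_)
      · rintro x ⟨(j | k), rfl⟩
        · exact hT j
        · exact .ofLeft ⟨k, rfl⟩ (Game.Le.refl _)
      · rintro y ⟨m, rfl⟩
        exact .ofRight ⟨m, rfl⟩ (Game.Le.refl _)
      · rintro (h' | h') <;> exact h'.elim
  · intro h ιL ιR L hR R
    refine Game.Le.mk ?_ ?_ ?_
    · rintro x ⟨(i | k), rfl⟩
      · refine h _ ?_ i
        intro j
        exact .ofLeft ⟨Sum.inl j, rfl⟩ (Game.Le.refl _)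
      · exact .ofLeft ⟨Sum.inr k, rfl⟩ (Game.Le.refl _)
    · rintro y ⟨m, rfl⟩
      exact .ofRight ⟨m, rfl⟩ (Game.Le.refl _)
    · rintro (h' | h') <;> exact h'.elim
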